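/- As p → +∞, u_p converges to the function t ↦ 1 - |t| (which equals 2G(t,0), twice the Green's function of -d²/dt² with Dirichlet boundary conditions on (-1,1) at the origin) uniformly on [-1,1]; moreover, for every compact set K ⊂ [-1,1] \ {0}, both sup_K |u_p - (1-|·|)| → 0 and sup_K |u_p' - (1-|·|)'| → 0 as p → +∞. -/

import Mathlib

/-!
Write `M = u(0)` and `L = √(2/(p+1) M^(p+1))`. Multiplying the equation by `u'` gives the energy
identity `u'² + 2/(p+1) u^(p+1) = L²`, so `|u'| ≤ L = |u'(±1)|`; together with concavity this
squeezes `M (1 - |t|) ≤ u(t) ≤ L (1 - |t|)`, and `M ≤ L` forces `M^(p-1) ≥ (p+1)/2`, hence `M > 1`.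
Concavity also gives `|u'(t) + 1| ≤ (L - 1)/t` on `(0, 1]`, so everything follows from `L → 1`.

For this, let `u(t) = θM`. Since `u'' ≤ -(θM)^p` on `[0, t]`, we get `t² ≤ 4(1-θ)/((p+1)θ^p)`;
at `t` the energy identity gives `|u'(t)| = √(1 - θ^(p+1)) L`, which concavity turns into
`√(1 - θ^(p+1)) (1 - t) L ≤ M`. For `θ = p^(-1/p)` we have `θ^p = 1/p`, so both factors tend to `1`
and `L/M → 1`; then `M^(p-1) = (p+1)/2 (L/M)²` forces `M → 1`, hence `L → 1`.
-/

open Real Set Filter Topology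

noncomputable section

/-- `u` is the (unique) positive solution of the one-dimensional Lane–Emden problem
`-u'' = u^p` on `(-1,1)` with `u(-1) = u(1) = 0`; it is even, positive on `(-1,1)`,
decreasing on `[0,1]`, and its sup norm is attained at `0`. -/
def IsLaneEmden (p : ℝ) (u : ℝ → ℝ) : Prop :=
  ContDiff ℝ 2 u ∧
  (∀ t ∈ Ioo (-1 : ℝ) 1, deriv (deriv u) t = -(u t ^ p)) ∧
  u (-1) = 0 ∧ u 1 = 0 ∧
  (∀ t ∈ Ioo (-1 : ℝ) 1, 0 < u t) ∧
  (∀ t : ℝ, u (-t) = u t) ∧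
  (∀ ⦃s t : ℝ⦄, s ∈ Icc (0 : ℝ) 1 → t ∈ Icc (0 : ℝ) 1 → s ≤ t → u t ≤ u s) ∧
  (∀ t ∈ Icc (-1 : ℝ) 1, u t ≤ u 0)

theorem Function.Even.deriv_neg {g : ℝ → ℝ} (hg : Function.Even g) (x : ℝ) :
    deriv g (-x) = -deriv g x := by
  simpa [funext hg] using deriv_comp_neg g (-x)

theorem deriv_one_sub_abs_of_pos {t : ℝ} (ht : 0 < t) :
    deriv (fun s : ℝ => 1 - |s|) t = -1 := by
  refine ((hasDerivAt_id t).const_sub 1).congr_of_eventuallyEq ?_ |>.deriv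
  filter_upwards [Ioi_mem_nhds ht] with s hs
  rw [abs_of_pos hs, id]

theorem IsClosed.exists_pos_le_abs {K : Set ℝ} (hK : IsClosed K) (h0 : (0 : ℝ) ∉ K) :
    ∃ r > 0, ∀ t ∈ K, r ≤ |t| := by
  obtain ⟨r, hr, hball⟩ := Metric.isOpen_iff.1 hK.isOpen_compl 0 h0
  refine ⟨r, hr, fun t htK => ?_⟩
  by_contra! hlt
  exact hball (by rwa [Metric.mem_ball, Real.dist_eq, sub_zero]) htK

theorem le_sub_half_mul_sq_of_deriv_deriv_le {f : ℝ → ℝ} {a t : ℝ} (hf : Differentiable ℝ f)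
    (hf' : Differentiable ℝ (deriv f)) (h0 : deriv f 0 = 0) (ht : 0 ≤ t)
    (hf'' : ∀ x ∈ Ioo 0 t, deriv (deriv f) x ≤ -a) :
    f t ≤ f 0 - a / 2 * t ^ 2 := by
  have hderiv : ∀ x ∈ Icc 0 t, deriv f x + a * x ≤ 0 := by
    have hanti : AntitoneOn (fun x => deriv f x + a * x) (Icc 0 t) := by
      refine antitoneOn_of_deriv_nonpos (convex_Icc 0 t)
        (hf'.continuous.add (continuous_const.mul continuous_id)).continuousOn
        (hf'.add (differentiable_id.const_mul a)).differentiableOn fun x hx => ?_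
      rw [interior_Icc] at hx
      rw [((hf' x).hasDerivAt.fun_add ((hasDerivAt_id' x).const_mul a)).deriv]
      linarith [hf'' x hx]
    intro x hx
    simpa [h0] using hanti ⟨le_rfl, ht⟩ hx hx.1
  have hanti : AntitoneOn (fun x => f x + a / 2 * x ^ 2) (Icc 0 t) := by
    refine antitoneOn_of_deriv_nonpos (convex_Icc 0 t)
      (hf.continuous.add (continuous_const.mul (continuous_pow 2))).continuousOn
      (hf.add ((differentiable_pow 2).const_mul _)).differentiableOn fun x hx => ?_
    rw [interior_Icc] at hx
    rw [((hf x).hasDerivAt.fun_add ((hasDerivAt_pow 2 x).const_mul (a / 2))).deriv]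
    linarith [hderiv x (Ioo_subset_Icc_self hx)]
  linarith [hanti ⟨le_rfl, ht⟩ ⟨ht, le_rfl⟩ ht]

/-- By `IsLaneEmden.energy`, this is `|u'(±1)|`. -/
def boundarySlope (p : ℝ) (f : ℝ → ℝ) : ℝ := √(2 / (p + 1) * f 0 ^ (p + 1))

theorem boundarySlope_nonneg (p : ℝ) (f : ℝ → ℝ) : 0 ≤ boundarySlope p f := sqrt_nonneg _

def slopeFactor (p θ : ℝ) : ℝ := √(1 - θ ^ (p + 1)) * (1 - √(4 * (1 - θ) / ((p + 1) * θ ^ p)))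

theorem tendsto_slopeFactor : Tendsto (fun p : ℝ => slopeFactor p (p ^ (-p⁻¹))) atTop (𝓝 1) := by
  have hθ : Tendsto (fun p : ℝ => p ^ (-p⁻¹)) atTop (𝓝 1) := by
    have := tendsto_rpow_div.inv₀ one_ne_zero
    rw [inv_one] at this
    refine this.congr' ?_
    filter_upwards [eventually_ge_atTop 0] with p hp
    rw [rpow_neg hp, one_div]
  have hinv : Tendsto (fun p : ℝ => p⁻¹) atTop (𝓝 0) := tendsto_inv_atTop_zero
  have hlim := ((tendsto_const_nhds (x := (1 : ℝ))).sub (hinv.mul hθ)).sqrt.mul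
    ((tendsto_const_nhds (x := (1 : ℝ))).sub
      (((tendsto_const_nhds (x := (4 : ℝ))).mul ((tendsto_const_nhds (x := (1 : ℝ))).sub hθ)).div
        ((tendsto_const_nhds (x := (1 : ℝ))).add hinv) (by norm_num)).sqrt)
  rw [show √(1 - 0 * 1) * (1 - √(4 * (1 - 1) / (1 + 0))) = (1 : ℝ) by norm_num] at hlim
  refine hlim.congr' ?_
  filter_upwards [eventually_gt_atTop 0] with p hp
  have hpow : (p ^ (-p⁻¹)) ^ p = p⁻¹ := by
    rw [← rpow_mul hp.le, neg_mul, inv_mul_cancel₀ hp.ne', rpow_neg_one]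
  rw [slopeFactor, rpow_add_one (rpow_pos_of_pos hp _).ne', hpow, add_mul,
    mul_inv_cancel₀ hp.ne', one_mul]
  rfl

namespace IsLaneEmden

variable {p t θ : ℝ} {f : ℝ → ℝ}

theorem differentiable (h : IsLaneEmden p f) : Differentiable ℝ f :=
  h.1.differentiable (by norm_num)

theorem differentiable_deriv (h : IsLaneEmden p f) : Differentiable ℝ (deriv f) := by
  have h2 : ContDiff ℝ ((1 : ℕ) + 1) f := by exact_mod_cast h.1
  exact (contDiff_succ_iff_deriv.1 h2).2.2.differentiable (by norm_num)

theorem nonneg (h : IsLaneEmden p f) (ht : t ∈ Icc (-1) 1) : 0 ≤ f t := by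
  obtain ⟨-, -, hm1, h1, hpos, -⟩ := h
  rcases ht.1.eq_or_lt with rfl | h1t
  · exact hm1.ge
  rcases ht.2.eq_or_lt with rfl | ht1
  · exact h1.ge
  exact (hpos t ⟨h1t, ht1⟩).le

theorem apply_zero_pos (h : IsLaneEmden p f) : 0 < f 0 :=
  h.2.2.2.2.1 0 (by norm_num)

theorem deriv_neg (h : IsLaneEmden p f) (t : ℝ) : deriv f (-t) = -deriv f t :=
  Function.Even.deriv_neg h.2.2.2.2.2.1 t

theorem deriv_zero (h : IsLaneEmden p f) : deriv f 0 = 0 := by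
  have := h.deriv_neg 0
  rw [neg_zero] at this
  linarith

theorem antitoneOn_deriv (h : IsLaneEmden p f) : AntitoneOn (deriv f) (Icc (-1) 1) := by
  refine antitoneOn_of_deriv_nonpos (convex_Icc _ _) h.differentiable_deriv.continuous.continuousOn
    h.differentiable_deriv.differentiableOn fun x hx => ?_
  rw [interior_Icc] at hx
  rw [h.2.1 x hx, neg_nonpos]
  exact (rpow_pos_of_pos (h.2.2.2.2.1 x hx) p).le

theorem concaveOn (h : IsLaneEmden p f) : ConcaveOn ℝ (Icc (-1) 1) f :=
  (h.antitoneOn_deriv.mono interior_subset).concaveOn_of_deriv (convex_Icc _ _)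
    h.differentiable.continuous.continuousOn h.differentiable.differentiableOn

theorem deriv_nonpos (h : IsLaneEmden p f) (ht : t ∈ Icc 0 1) : deriv f t ≤ 0 :=
  h.deriv_zero ▸ h.antitoneOn_deriv (by norm_num) ⟨by linarith [ht.1], ht.2⟩ ht.1

theorem energy (h : IsLaneEmden p f) (hp : -1 < p) (ht : t ∈ Icc (-1) 1) :
    deriv f t ^ 2 + 2 / (p + 1) * f t ^ (p + 1) = 2 / (p + 1) * f 0 ^ (p + 1) := by
  set e := fun s => deriv f s ^ 2 + 2 / (p + 1) * f s ^ (p + 1)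
  have he : ∀ x ∈ interior (Icc (-1 : ℝ) 1), HasDerivAt e 0 x := by
    intro x hx
    rw [interior_Icc] at hx
    have hfx := h.2.2.2.2.1 x hx
    refine (((h.differentiable_deriv x).hasDerivAt.fun_pow 2).fun_add
      (((h.differentiable x).hasDerivAt.rpow_const (Or.inl hfx.ne')).const_mul
        (2 / (p + 1)))).congr_deriv ?_
    have hp1 : p + 1 ≠ 0 := by linarith
    rw [h.2.1 x hx, add_sub_cancel_right]
    field_simp
    ring
  have hcont : ContinuousOn e (Icc (-1) 1) := by
    exact (Continuous.add (h.differentiable_deriv.continuous.pow 2) (continuous_const.mul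
      (h.differentiable.continuous.rpow_const fun _ => Or.inr (by linarith)))).continuousOn
  have hdiff : DifferentiableOn ℝ e (interior (Icc (-1) 1)) :=
    fun x hx => (he x hx).differentiableAt.differentiableWithinAt
  have hmono : MonotoneOn e (Icc (-1) 1) :=
    monotoneOn_of_deriv_nonneg (convex_Icc _ _) hcont hdiff fun x hx => (he x hx).deriv.ge
  have hanti : AntitoneOn e (Icc (-1) 1) :=
    antitoneOn_of_deriv_nonpos (convex_Icc _ _) hcont hdiff fun x hx => (he x hx).deriv.le
  have h0 : (0 : ℝ) ∈ Icc (-1) 1 := by norm_num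
  have : e t = e 0 := by
    rcases le_total t 0 with ht0 | ht0
    · exact le_antisymm (hmono ht h0 ht0) (hanti ht h0 ht0)
    · exact le_antisymm (hanti h0 ht ht0) (hmono h0 ht ht0)
  simpa [e, h.deriv_zero] using this

theorem abs_deriv_le (h : IsLaneEmden p f) (hp : -1 < p) (ht : t ∈ Icc (-1) 1) :
    |deriv f t| ≤ boundarySlope p f := by
  have hft : 0 ≤ 2 / (p + 1) * f t ^ (p + 1) :=
    mul_nonneg (div_nonneg zero_le_two (by linarith)) (rpow_nonneg (h.nonneg ht) _)
  exact abs_le_sqrt (by linarith [h.energy hp ht])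

theorem neg_deriv_eq (h : IsLaneEmden p f) (hp : -1 < p) (ht : t ∈ Icc 0 1) :
    -deriv f t = √(1 - (f t / f 0) ^ (p + 1)) * boundarySlope p f := by
  have ht' : t ∈ Icc (-1) 1 := ⟨by linarith [ht.1], ht.2⟩
  have hE : 0 ≤ 2 / (p + 1) * f 0 ^ (p + 1) :=
    mul_nonneg (div_nonneg zero_le_two (by linarith)) (rpow_nonneg h.apply_zero_pos.le _)
  have hsq : deriv f t ^ 2 = (1 - (f t / f 0) ^ (p + 1)) * (2 / (p + 1) * f 0 ^ (p + 1)) := by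
    have hB := (rpow_pos_of_pos h.apply_zero_pos (p + 1)).ne'
    have hcancel : f t ^ (p + 1) / f 0 ^ (p + 1) * (2 / (p + 1) * f 0 ^ (p + 1))
        = 2 / (p + 1) * f t ^ (p + 1) := by
      field_simp
    rw [div_rpow (h.nonneg ht') h.apply_zero_pos.le, sub_mul, one_mul, hcancel]
    linarith [h.energy hp ht']
  rw [boundarySlope, ← sqrt_mul' _ hE, ← hsq, sqrt_sq_eq_abs, abs_of_nonpos (h.deriv_nonpos ht)]

theorem le_boundarySlope_mul (h : IsLaneEmden p f) (hp : -1 < p) (ht : t ∈ Icc 0 1) :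
    f t ≤ boundarySlope p f * (1 - t) := by
  have hbound := (convex_Icc (-1 : ℝ) 1).norm_image_sub_le_of_norm_deriv_le
    (fun x _ => h.differentiable x) (fun x hx => h.abs_deriv_le hp hx)
    ⟨by linarith [ht.1], ht.2⟩ (by norm_num : (1 : ℝ) ∈ Icc (-1) 1)
  rwa [h.2.2.2.1, Real.norm_eq_abs, Real.norm_eq_abs, zero_sub, abs_neg,
    abs_of_nonneg (h.nonneg ⟨by linarith [ht.1], ht.2⟩), abs_of_nonneg (by linarith [ht.2])]
    at hbound

theorem apply_zero_mul_le (h : IsLaneEmden p f) (ht : t ∈ Icc 0 1) : f 0 * (1 - t) ≤ f t := by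
  have := h.concaveOn.2 (by norm_num : (0 : ℝ) ∈ Icc (-1) 1) (by norm_num : (1 : ℝ) ∈ Icc (-1) 1)
    (sub_nonneg.2 ht.2) ht.1 (sub_add_cancel 1 t)
  simp only [smul_eq_mul, mul_zero, mul_one, zero_add, h.2.2.2.1] at this
  linarith

theorem apply_zero_le_boundarySlope (h : IsLaneEmden p f) (hp : -1 < p) :
    f 0 ≤ boundarySlope p f := by
  simpa using h.le_boundarySlope_mul hp (t := 0) (by norm_num)

theorem rpow_sub_one_eq (h : IsLaneEmden p f) (hp : -1 < p) :
    f 0 ^ (p - 1) = (p + 1) / 2 * (boundarySlope p f / f 0) ^ 2 := by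
  have hM := h.apply_zero_pos
  have hE : 0 ≤ 2 / (p + 1) * f 0 ^ (p + 1) :=
    mul_nonneg (div_nonneg zero_le_two (by linarith)) (rpow_nonneg hM.le _)
  have hsplit : f 0 ^ (p + 1) = f 0 ^ (p - 1) * f 0 ^ 2 := by
    rw [← rpow_natCast, ← rpow_add hM]
    norm_num [sub_add]
  rw [boundarySlope, div_pow, sq_sqrt hE, hsplit]
  field_simp [(by linarith : p + 1 ≠ 0)]

theorem add_one_div_two_le_rpow_sub_one (h : IsLaneEmden p f) (hp : -1 < p) :
    (p + 1) / 2 ≤ f 0 ^ (p - 1) := by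
  rw [h.rpow_sub_one_eq hp]
  refine le_mul_of_one_le_right (by linarith) (one_le_pow₀ ?_)
  exact (one_le_div h.apply_zero_pos).2 (h.apply_zero_le_boundarySlope hp)

theorem one_lt_apply_zero (h : IsLaneEmden p f) (hp : 1 < p) : 1 < f 0 := by
  by_contra! hM
  have := rpow_le_one h.apply_zero_pos.le hM (by linarith : 0 ≤ p - 1)
  linarith [h.add_one_div_two_le_rpow_sub_one (by linarith)]

theorem sq_le_of_apply_eq_mul (h : IsLaneEmden p f) (hp : 0 ≤ p) (ht : t ∈ Icc 0 1)
    (hθ : 0 < θ) (hft : f t = θ * f 0) :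
    t ^ 2 ≤ 4 * (1 - θ) / ((p + 1) * θ ^ p) := by
  have hM := h.apply_zero_pos
  have hf'' : ∀ x ∈ Ioo 0 t, deriv (deriv f) x ≤ -(θ * f 0) ^ p := by
    intro x hx
    rw [h.2.1 x ⟨by linarith [hx.1], by linarith [hx.2, ht.2]⟩, neg_le_neg_iff, ← hft]
    exact rpow_le_rpow (h.nonneg ⟨by linarith [ht.1], ht.2⟩)
      (h.2.2.2.2.2.2.1 ⟨hx.1.le, by linarith [hx.2, ht.2]⟩ ht hx.2.le) (by linarith)
  have htaylor := le_sub_half_mul_sq_of_deriv_deriv_le h.differentiable h.differentiable_deriv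
    h.deriv_zero ht.1 hf''
  have hMp : f 0 ^ p = f 0 ^ (p - 1) * f 0 := by
    rw [← rpow_add_one hM.ne', sub_add_cancel]
  rw [hft, mul_rpow hθ.le hM.le, hMp] at htaylor
  have hkey : θ ^ p * f 0 ^ (p - 1) * t ^ 2 ≤ 2 * (1 - θ) := by
    refine le_of_mul_le_mul_right ?_ hM
    linarith
  have hlow : θ ^ p * ((p + 1) / 2) * t ^ 2 ≤ θ ^ p * f 0 ^ (p - 1) * t ^ 2 := by
    gcongr
    exact h.add_one_div_two_le_rpow_sub_one (by linarith)
  rw [le_div_iff₀ (by positivity)]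
  linarith

theorem mul_boundarySlope_le_of_apply_eq_mul (h : IsLaneEmden p f) (hp : -1 < p)
    (ht : t ∈ Ico 0 1) (hft : f t = θ * f 0) :
    √(1 - θ ^ (p + 1)) * (1 - t) * boundarySlope p f ≤ θ * f 0 := by
  have hslope := h.concaveOn.slope_le_deriv (x := t) (y := 1) ⟨by linarith [ht.1], ht.2.le⟩
    (by norm_num) ht.2 (h.differentiable t)
  have hderiv := h.neg_deriv_eq hp ⟨ht.1, ht.2.le⟩
  rw [hft, mul_div_cancel_right₀ _ h.apply_zero_pos.ne'] at hderiv
  rw [slope_def_field, h.2.2.2.1, hft, div_le_iff₀ (by linarith [ht.2])] at hslope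
  calc √(1 - θ ^ (p + 1)) * (1 - t) * boundarySlope p f = -deriv f t * (1 - t) := by
        rw [hderiv]; ring
    _ ≤ θ * f 0 := by linarith

theorem slopeFactor_mul_boundarySlope_le (h : IsLaneEmden p f) (hp : 0 ≤ p) (hθ0 : 0 < θ)
    (hθ1 : θ < 1) : slopeFactor p θ * boundarySlope p f ≤ f 0 := by
  have hM := h.apply_zero_pos
  have hθM : 0 < θ * f 0 := mul_pos hθ0 hM
  obtain ⟨t, ht, hft⟩ : θ * f 0 ∈ f '' Icc 0 1 :=
    intermediate_value_Icc' zero_le_one h.differentiable.continuous.continuousOn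
      ⟨by rw [h.2.2.2.1]; exact hθM.le, by nlinarith⟩
  have ht1 : t ≠ 1 := by
    rintro rfl
    rw [h.2.2.2.1] at hft
    linarith
  have htle : t ≤ √(4 * (1 - θ) / ((p + 1) * θ ^ p)) := by
    simpa [abs_of_nonneg ht.1] using abs_le_sqrt (h.sq_le_of_apply_eq_mul hp ht hθ0 hft)
  calc slopeFactor p θ * boundarySlope p f
      ≤ √(1 - θ ^ (p + 1)) * (1 - t) * boundarySlope p f := by
        unfold slopeFactor
        gcongr
        exact boundarySlope_nonneg p f
    _ ≤ θ * f 0 :=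
        h.mul_boundarySlope_le_of_apply_eq_mul (by linarith) ⟨ht.1, ht.2.lt_of_ne ht1⟩ hft
    _ ≤ f 0 := by nlinarith

theorem one_le_boundarySlope (h : IsLaneEmden p f) (hp : 1 < p) : 1 ≤ boundarySlope p f :=
  (h.one_lt_apply_zero hp).le.trans (h.apply_zero_le_boundarySlope (by linarith))

theorem abs_sub_one_sub_abs_le (h : IsLaneEmden p f) (hp : 1 < p) (ht : t ∈ Icc (-1) 1) :
    |f t - (1 - |t|)| ≤ boundarySlope p f - 1 := by
  have hs : |t| ∈ Icc 0 1 := ⟨abs_nonneg t, abs_le.2 ht⟩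
  have heven : f |t| = f t := by
    rcases abs_choice t with habs | habs <;> rw [habs]
    exact h.2.2.2.2.2.1 t
  have hlow := h.apply_zero_mul_le hs
  have hup := h.le_boundarySlope_mul (by linarith) hs
  have hM := h.one_lt_apply_zero hp
  have hL := h.one_le_boundarySlope hp
  rw [← heven, abs_le]
  constructor <;> nlinarith [mul_nonneg (sub_nonneg.2 hL) hs.1,
    mul_nonneg (sub_nonneg.2 hM.le) (sub_nonneg.2 hs.2)]

theorem abs_deriv_add_one_le (h : IsLaneEmden p f) (hp : 1 < p) (ht : t ∈ Ioc 0 1) :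
    |deriv f t + 1| ≤ (boundarySlope p f - 1) / t := by
  have hslope := h.concaveOn.deriv_le_slope (x := 0) (y := t) (by norm_num)
    ⟨by linarith [ht.1], ht.2⟩ ht.1 (h.differentiable t)
  rw [slope_def_field, sub_zero, le_div_iff₀ ht.1] at hslope
  have hlow := h.abs_deriv_le (by linarith) ⟨by linarith [ht.1], ht.2⟩
  have hup := h.le_boundarySlope_mul (by linarith) ⟨ht.1.le, ht.2⟩
  have hM := h.one_lt_apply_zero hp
  have hL := h.one_le_boundarySlope hp
  rw [abs_le]
  constructor
  · linarith [le_div_self (sub_nonneg.2 hL) ht.1 ht.2, neg_abs_le (deriv f t)]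
  · rw [le_div_iff₀ ht.1]
    nlinarith [mul_nonneg (sub_nonneg.2 hL) ht.1.le]

theorem abs_deriv_sub_deriv_one_sub_abs_le (h : IsLaneEmden p f) (hp : 1 < p)
    (ht : t ∈ Icc (-1) 1) (ht0 : t ≠ 0) :
    |deriv f t - deriv (fun s : ℝ => 1 - |s|) t| ≤ (boundarySlope p f - 1) / |t| := by
  have hpos : ∀ s ∈ Ioc (0 : ℝ) 1,
      |deriv f s - deriv (fun s : ℝ => 1 - |s|) s| ≤ (boundarySlope p f - 1) / |s| := by
    intro s hs
    rw [deriv_one_sub_abs_of_pos hs.1, abs_of_pos hs.1, sub_neg_eq_add]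
    exact h.abs_deriv_add_one_le hp hs
  rcases ht0.lt_or_gt with hneg | hpos'
  · have heven : Function.Even (fun s : ℝ => 1 - |s|) := fun s => by simp
    have := hpos (-t) ⟨neg_pos.2 hneg, by linarith [ht.1]⟩
    rwa [h.deriv_neg, heven.deriv_neg, neg_sub_neg, abs_sub_comm, abs_neg] at this
  · exact hpos t ⟨hpos', ht.2⟩

end IsLaneEmden

section Asymptotics

variable {u : ℝ → ℝ → ℝ}

theorem tendsto_boundarySlope_div_apply_zero (hu : ∀ p : ℝ, 1 < p → IsLaneEmden p (u p)) :
    Tendsto (fun p => boundarySlope p (u p) / u p 0) atTop (𝓝 1) := by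
  have hg := tendsto_slopeFactor
  have hginv : Tendsto (fun p : ℝ => (slopeFactor p (p ^ (-p⁻¹)))⁻¹) atTop (𝓝 1) := by
    simpa using hg.inv₀ one_ne_zero
  refine tendsto_of_tendsto_of_tendsto_of_le_of_le' tendsto_const_nhds hginv ?_ ?_
  · filter_upwards [eventually_gt_atTop 1] with p hp
    exact (one_le_div (hu p hp).apply_zero_pos).2
      ((hu p hp).apply_zero_le_boundarySlope (by linarith))
  · filter_upwards [eventually_gt_atTop 1, hg.eventually (eventually_gt_nhds zero_lt_one)]
      with p hp hgp
    have hθ0 : 0 < p ^ (-p⁻¹) := rpow_pos_of_pos (by linarith) _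
    have hθ1 : p ^ (-p⁻¹) < 1 :=
      rpow_lt_one_of_one_lt_of_neg hp (neg_lt_zero.2 (inv_pos.2 (by linarith)))
    rw [div_le_iff₀ (hu p hp).apply_zero_pos, le_inv_mul_iff₀ hgp]
    exact (hu p hp).slopeFactor_mul_boundarySlope_le (by linarith) hθ0 hθ1

theorem tendsto_apply_zero (hu : ∀ p : ℝ, 1 < p → IsLaneEmden p (u p)) :
    Tendsto (fun p => u p 0) atTop (𝓝 1) := by
  have hlog : Tendsto (fun p : ℝ => log (p + 1) / (p - 1)) atTop (𝓝 0) := by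
    have := (tendsto_pow_log_div_mul_add_atTop 1 (-2) 1 one_ne_zero).comp
      (tendsto_atTop_add_const_right atTop 1 tendsto_id)
    refine this.congr' (Eventually.of_forall fun p => ?_)
    simp only [Function.comp_apply, id, pow_one, one_mul]
    ring_nf
  have hratio := ((tendsto_boundarySlope_div_apply_zero hu).pow 2).eventually
    (eventually_lt_nhds (by norm_num : (1 : ℝ) ^ 2 < 2))
  have hlogM : Tendsto (fun p => log (u p 0)) atTop (𝓝 0) := by
    refine tendsto_of_tendsto_of_tendsto_of_le_of_le' tendsto_const_nhds hlog ?_ ?_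
    · filter_upwards [eventually_gt_atTop 1] with p hp
      exact log_nonneg ((hu p hp).one_lt_apply_zero hp).le
    · filter_upwards [eventually_gt_atTop 1, hratio] with p hp hR
      have hM := (hu p hp).apply_zero_pos
      have hpow : u p 0 ^ (p - 1) ≤ p + 1 := by
        rw [(hu p hp).rpow_sub_one_eq (by linarith)]
        nlinarith
      rw [le_div_iff₀ (by linarith), mul_comm, ← log_rpow hM]
      exact log_le_log (rpow_pos_of_pos hM _) hpow
  have := (continuous_exp.tendsto 0).comp hlogM
  rw [exp_zero] at this
  refine this.congr' ?_
  filter_upwards [eventually_gt_atTop 1] with p hp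
  exact exp_log (hu p hp).apply_zero_pos

theorem tendsto_boundarySlope (hu : ∀ p : ℝ, 1 < p → IsLaneEmden p (u p)) :
    Tendsto (fun p => boundarySlope p (u p)) atTop (𝓝 1) := by
  have := (tendsto_boundarySlope_div_apply_zero hu).mul (tendsto_apply_zero hu)
  rw [one_mul] at this
  refine this.congr' ?_
  filter_upwards [eventually_gt_atTop 1] with p hp
  exact div_mul_cancel₀ _ (hu p hp).apply_zero_pos.ne'

theorem exists_boundarySlope_sub_one_lt (hu : ∀ p : ℝ, 1 < p → IsLaneEmden p (u p)) {η : ℝ}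
    (hη : 0 < η) : ∃ p₀ : ℝ, ∀ p ≥ p₀, 1 < p ∧ boundarySlope p (u p) - 1 < η := by
  refine eventually_atTop.1 ((eventually_gt_atTop 1).and ?_)
  filter_upwards [(tendsto_boundarySlope hu).eventually (eventually_lt_nhds
    (by linarith : (1 : ℝ) < 1 + η))] with p hp
  linarith

end Asymptotics

/-- As `p → +∞`, `u_p → 1 - |·| = 2G(·,0)` uniformly on `[-1,1]`, and in `C¹` on
compact subsets of `[-1,1] \ {0}`. -/
theorem convergence_to_green_function
    (u : ℝ → ℝ → ℝ) (hu : ∀ p : ℝ, 1 < p → IsLaneEmden p (u p)) :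
    (∀ ε > (0 : ℝ), ∃ p₀ : ℝ, ∀ p ≥ p₀, ∀ t ∈ Icc (-1 : ℝ) 1,
      |u p t - (1 - |t|)| < ε) ∧
    (∀ K : Set ℝ, IsCompact K → K ⊆ Icc (-1 : ℝ) 1 \ {0} →
      ∀ ε > (0 : ℝ), ∃ p₀ : ℝ, ∀ p ≥ p₀, ∀ t ∈ K,
        |u p t - (1 - |t|)| < ε ∧
        |deriv (u p) t - deriv (fun s : ℝ => 1 - |s|) t| < ε) := by
  refine ⟨fun ε hε => ?_, fun K hK hK0 ε hε => ?_⟩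
  · obtain ⟨p₀, hp₀⟩ := exists_boundarySlope_sub_one_lt hu hε
    exact ⟨p₀, fun p hp t ht =>
      ((hu p (hp₀ p hp).1).abs_sub_one_sub_abs_le (hp₀ p hp).1 ht).trans_lt (hp₀ p hp).2⟩
  obtain ⟨r, hr, hrK⟩ := hK.isClosed.exists_pos_le_abs fun h0 => (hK0 h0).2 rfl
  obtain ⟨p₀, hp₀⟩ := exists_boundarySlope_sub_one_lt hu (by positivity : 0 < ε * r)
  refine ⟨p₀, fun p hp t htK => ?_⟩
  obtain ⟨hp1, hL⟩ := hp₀ p hp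
  obtain ⟨ht, ht0⟩ := hK0 htK
  have hrt := hrK t htK
  have hL1 : 0 ≤ boundarySlope p (u p) - 1 := sub_nonneg.2 ((hu p hp1).one_le_boundarySlope hp1)
  have herr : (boundarySlope p (u p) - 1) / |t| < ε := by
    rw [div_lt_iff₀ (hr.trans_le hrt)]
    nlinarith
  refine ⟨?_, ((hu p hp1).abs_deriv_sub_deriv_one_sub_abs_le hp1 ht ht0).trans_lt herr⟩
  calc |u p t - (1 - |t|)| ≤ boundarySlope p (u p) - 1 := (hu p hp1).abs_sub_one_sub_abs_le hp1 ht
    _ ≤ (boundarySlope p (u p) - 1) / |t| := le_div_self hL1 (hr.trans_le hrt) (abs_le.2 ht)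
    _ < ε := herr
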